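/- Zeroth-order Sommerfeld limit: if h : ℝ → ℝ is continuous, bounded, and integrable on (-∞, μ], then ∫_{-∞}^{∞} h(ε)·f_FD((ε-μ)/T) dε → ∫_{-∞}^{μ} h(ε) dε as T → 0⁺. -/

import Mathlib

/-!
For every `ε ≠ μ`, `fFD ((ε - μ) / T)` tends to `1` or `0` as `T → 0⁺` according as `ε < μ` or
`ε > μ`, so the integrand converges almost everywhere to `h` restricted to `(-∞, μ]`. For
`0 < T ≤ 1` it is dominated by `|h|` on `(-∞, μ]` and by `C e^{μ - ε}` on `(μ, ∞)`, since there
`fFD ((ε - μ) / T) ≤ e^{-(ε - μ) / T} ≤ e^{μ - ε}`; dominated convergence concludes.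
-/

open MeasureTheory Filter

noncomputable def fFD (x : ℝ) : ℝ := (Real.exp x + 1)⁻¹

open Set Topology

lemma fFD_nonneg (x : ℝ) : 0 ≤ fFD x := by
  unfold fFD; positivity

lemma fFD_le_one (x : ℝ) : fFD x ≤ 1 :=
  inv_le_one_of_one_le₀ (le_add_of_nonneg_left (Real.exp_pos x).le)

lemma fFD_le_exp_neg (x : ℝ) : fFD x ≤ Real.exp (-x) := by
  rw [Real.exp_neg]
  exact inv_anti₀ (Real.exp_pos x) (le_add_of_nonneg_right zero_le_one)

lemma continuous_fFD : Continuous fFD :=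
  (Real.continuous_exp.add continuous_const).inv₀ fun x => (add_pos (Real.exp_pos x) one_pos).ne'

lemma tendsto_fFD_atBot : Tendsto fFD atBot (𝓝 1) := by
  have := (Real.tendsto_exp_atBot.add_const 1).inv₀ (by norm_num : (0 : ℝ) + 1 ≠ 0)
  rwa [zero_add, inv_one] at this

lemma tendsto_fFD_atTop : Tendsto fFD atTop (𝓝 0) :=
  (tendsto_atTop_add_const_right _ 1 Real.tendsto_exp_atTop).inv_tendsto_atTop

lemma fFD_div_le_exp_neg {x T : ℝ} (hx : 0 ≤ x) (hT : 0 < T) (hT₁ : T ≤ 1) :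
    fFD (x / T) ≤ Real.exp (-x) :=
  (fFD_le_exp_neg _).trans (Real.exp_le_exp.2 (neg_le_neg (le_div_self hx hT hT₁)))

lemma tendsto_fFD_sub_div_nhdsGT_zero {ε μ : ℝ} (hε : ε ≠ μ) :
    Tendsto (fun T => fFD ((ε - μ) / T)) (𝓝[>] 0) (𝓝 ((Iic μ).indicator 1 ε)) := by
  simp only [div_eq_mul_inv]
  rcases hε.lt_or_gt with hlt | hgt
  · rw [indicator_of_mem (mem_Iic.2 hlt.le), Pi.one_apply]
    exact tendsto_fFD_atBot.comp
      ((tendsto_const_mul_atBot_of_neg (sub_neg.2 hlt)).2 tendsto_inv_nhdsGT_zero)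
  · rw [indicator_of_notMem (notMem_Iic.2 hgt)]
    exact tendsto_fFD_atTop.comp
      ((tendsto_const_mul_atTop_of_pos (sub_pos.2 hgt)).2 tendsto_inv_nhdsGT_zero)

noncomputable def fermiMajorant (h : ℝ → ℝ) (C μ : ℝ) : ℝ → ℝ :=
  (Iic μ).indicator (fun ε => |h ε|) + (Ioi μ).indicator (fun ε => C * Real.exp (μ - ε))

lemma integrable_fermiMajorant {h : ℝ → ℝ} (C μ : ℝ) (hint : IntegrableOn h (Iic μ)) :
    Integrable (fermiMajorant h C μ) := by
  have htail : IntegrableOn (fun ε => C * Real.exp (μ - ε)) (Ioi μ) := by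
    refine IntegrableOn.congr_fun ((integrableOn_exp_neg_Ioi μ).const_mul (C * Real.exp μ))
      (fun ε _ => ?_) measurableSet_Ioi
    rw [sub_eq_add_neg, Real.exp_add, mul_assoc]
  exact (IntegrableOn.integrable_indicator hint.abs measurableSet_Iic).add
    (htail.integrable_indicator measurableSet_Ioi)

lemma norm_mul_fFD_sub_div_le_fermiMajorant {h : ℝ → ℝ} {C : ℝ} (hC : ∀ x, |h x| ≤ C)
    (μ : ℝ) {T : ℝ} (hT : 0 < T) (hT₁ : T ≤ 1) (ε : ℝ) :
    ‖h ε * fFD ((ε - μ) / T)‖ ≤ fermiMajorant h C μ ε := by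
  rw [Real.norm_eq_abs, abs_mul, abs_of_nonneg (fFD_nonneg _), fermiMajorant, Pi.add_apply]
  rcases le_or_gt ε μ with hle | hgt
  · rw [indicator_of_mem (mem_Iic.2 hle), indicator_of_notMem (notMem_Ioi.2 hle), add_zero]
    exact mul_le_of_le_one_right (abs_nonneg _) (fFD_le_one _)
  · rw [indicator_of_notMem (notMem_Iic.2 hgt), indicator_of_mem (mem_Ioi.2 hgt), zero_add]
    have hexp : fFD ((ε - μ) / T) ≤ Real.exp (μ - ε) := by
      simpa using fFD_div_le_exp_neg (sub_nonneg.2 hgt.le) hT hT₁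
    exact mul_le_mul (hC ε) hexp (fFD_nonneg _) ((abs_nonneg _).trans (hC ε))

theorem sommerfeld_zeroth_order
    (h : ℝ → ℝ) (μ : ℝ)
    (hcont : Continuous h)
    (hb : ∃ C : ℝ, ∀ x, |h x| ≤ C)
    (hint : IntegrableOn h (Set.Iic μ)) :
    Tendsto (fun T : ℝ => ∫ ε : ℝ, h ε * fFD ((ε - μ) / T))
      (nhdsWithin 0 (Set.Ioi 0)) (nhds (∫ ε in Set.Iic μ, h ε)) := by
  obtain ⟨C, hC⟩ := hb
  rw [← integral_indicator measurableSet_Iic]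
  refine tendsto_integral_filter_of_dominated_convergence (fermiMajorant h C μ)
    (Eventually.of_forall fun T => ?_) ?_ (integrable_fermiMajorant C μ hint) ?_
  · exact (hcont.mul (continuous_fFD.comp
      ((continuous_id.sub continuous_const).div_const T))).aestronglyMeasurable
  · filter_upwards [Ioc_mem_nhdsGT (zero_lt_one' ℝ)] with T hT
    exact ae_of_all _ (norm_mul_fFD_sub_div_le_fermiMajorant hC μ hT.1 hT.2)
  · filter_upwards [Measure.ae_ne volume μ] with ε hε
    have hind : (Iic μ).indicator h ε = h ε * (Iic μ).indicator 1 ε := by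
      by_cases hmem : ε ∈ Iic μ <;> simp [hmem]
    rw [hind]
    exact (tendsto_fFD_sub_div_nhdsGT_zero hε).const_mul (h ε)
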